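/- Let A be a random n×n complex matrix on a probability space. For τ > 0, let F(τ) denote the event that A has n distinct eigenvalues λ_1,…,λ_n with max_j κ(λ_j)² ≤ τ. Fix 0 < τ₁ < τ₂ and ε, η₀ > 0 with η₀ ≥ n·ε·√τ₂. Then Pr( F(τ₁) ∧ η(A) ≥ η₀ ) ≥ Pr( F(τ₂) ∧ η(A) ≥ η₀ ) − (4/π)·E[vol Λ_ε(A)] / (ε²·τ₁). -/

import Mathlib

open MeasureTheory Matrix
open scoped ENNReal

noncomputable section

/-- ℓ²→ℓ² operator norm of a complex square matrix. -/
def opNorm {n : ℕ} (A : Matrix (Fin n) (Fin n) ℂ) : ℝ :=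
  ‖(Matrix.toEuclideanCLM (𝕜 := ℂ) A : EuclideanSpace ℂ (Fin n) →L[ℂ] EuclideanSpace ℂ (Fin n))‖

/-- `svAsc A i` : the `i`-th *smallest* singular value of `A` (0-indexed). -/
def svAsc {n : ℕ} (A : Matrix (Fin n) (Fin n) ℂ) (i : Fin n) : ℝ :=
  Real.sqrt ((Matrix.isHermitian_conjTranspose_mul_self A).eigenvalues
    (Tuple.sort ((Matrix.isHermitian_conjTranspose_mul_self A).eigenvalues) i))

/-- `sLow A m` = σ_{n-m}(A), the (m+1)-th smallest singular value. -/
def sLow {n : ℕ} (A : Matrix (Fin n) (Fin n) ℂ) (m : ℕ) : ℝ :=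
  if h : m < n then svAsc A ⟨m, h⟩ else 0

/-- the ε-pseudospectrum of a matrix, as a subset of ℂ. -/
def pspec {n : ℕ} (ε : ℝ) (A : Matrix (Fin n) (Fin n) ℂ) : Set ℂ :=
  {z | sLow (z • (1 : Matrix (Fin n) (Fin n) ℂ) - A) 0 ≤ ε}

open scoped Classical in
/-- minimum gap between eigenvalues (counted with multiplicity). -/
def minGap {n : ℕ} (A : Matrix (Fin n) (Fin n) ℂ) : ℝ :=
  sInf {d | ∃ a ∈ A.charpoly.roots, ∃ b ∈ A.charpoly.roots.erase a, d = ‖a - b‖}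

/-- eigenvector condition number. -/
def kappaV {n : ℕ} (A : Matrix (Fin n) (Fin n) ℂ) : ℝ≥0∞ :=
  ⨅ (V : Matrix (Fin n) (Fin n) ℂ) (D : Matrix (Fin n) (Fin n) ℂ)
    (_ : IsUnit V) (_ : D.IsDiag) (_ : A = V * D * V⁻¹),
    ENNReal.ofReal (opNorm V * opNorm V⁻¹)

/-- spectral radius of a matrix. -/
def spr {n : ℕ} (A : Matrix (Fin n) (Fin n) ℂ) : ℝ :=
  sSup {x : ℝ | ∃ μ ∈ spectrum ℂ A, x = ‖μ‖}

/-- ℓ∞→ℓ∞ operator norm (max absolute row sum). -/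
def infNorm {n : ℕ} (A : Matrix (Fin n) (Fin n) ℂ) : ℝ :=
  ⨆ i, ∑ j, ‖A i j‖

/-- ℓ² norm of a vector in ℂⁿ. -/
def l2norm {n : ℕ} (v : Fin n → ℂ) : ℝ :=
  Real.sqrt (∑ j, ‖v j‖ ^ 2)

/-- standard complex Gaussian measure on ℂ. -/
def gaussianC : Measure ℂ :=
  MeasureTheory.volume.withDensity fun z => ENNReal.ofReal (Real.pi⁻¹ * Real.exp (-(‖z‖ ^ 2)))

/-- law of δ ⬝ g : δ Bernoulli(ρ), g standard complex Gaussian, independent. -/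
def sparseG (ρ : ℝ) : Measure ℂ :=
  ENNReal.ofReal ρ • gaussianC + ENNReal.ofReal (1 - ρ) • Measure.dirac 0

/-- law of a vector with i.i.d. sparse-Gaussian entries. -/
def vecLaw (n : ℕ) (ρ : ℝ) : Measure (Fin n → ℂ) :=
  Measure.pi fun _ => sparseG ρ

instance matrixMeasurableSpace {n : ℕ} : MeasurableSpace (Matrix (Fin n) (Fin n) ℂ) :=
  inferInstanceAs (MeasurableSpace (Fin n → Fin n → ℂ))

/-- law of the random matrix N_g with i.i.d. sparse-Gaussian entries. -/
def matLaw (n : ℕ) (ρ : ℝ) : Measure (Matrix (Fin n) (Fin n) ℂ) :=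
  Measure.pi fun _ : Fin n => vecLaw n ρ

/-- Lévy concentration p(v,r) of ⟨ĝ ⊙ δ̂, v⟩. -/
def pconc (n : ℕ) (ρ : ℝ) (v : Fin n → ℂ) (r : ℝ) : ℝ≥0∞ :=
  ⨆ z : ℂ, vecLaw n ρ {x | ‖(∑ j, x j * (starRingEnd ℂ) (v j)) - z‖ ≤ r}

/-- incompressible unit vectors. -/
def Incomp (n : ℕ) (ρ : ℝ) (r s : ℝ) : Set (Fin n → ℂ) :=
  {v | l2norm v = 1 ∧ pconc n ρ v r ≤ ENNReal.ofReal s}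

/-- compressible unit vectors. -/
def Comp (n : ℕ) (ρ : ℝ) (r s : ℝ) : Set (Fin n → ℂ) :=
  {v | l2norm v = 1 ∧ ENNReal.ofReal s ≤ pconc n ρ v r}

/-- eigenvalue condition number κ(λ_j) read off from a diagonalizing matrix V:
    (norm of j-th column of V) times (norm of j-th row of V⁻¹). -/
def evCond {n : ℕ} (V : Matrix (Fin n) (Fin n) ℂ) (j : Fin n) : ℝ :=
  l2norm (fun i => V i j) * l2norm (fun i => V⁻¹ j i)

/-- the event that `B` has `n` distinct eigenvalues with all squared
    eigenvalue condition numbers at most τ. -/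
def distinctCondEvent {n : ℕ} (τ : ℝ) (B : Matrix (Fin n) (Fin n) ℂ) : Prop :=
  ∃ (V : Matrix (Fin n) (Fin n) ℂ) (lam : Fin n → ℂ), Function.Injective lam ∧ IsUnit V ∧
    B = V * Matrix.diagonal lam * V⁻¹ ∧ ∀ j, (evCond V j) ^ 2 ≤ τ

/-! If `B = V diag(λ) V⁻¹` has all `κ(λᵢ) ≤ √τ₂` but `κ(λⱼ) > √τ₁` for some `j`, test the
resolvent `(z - B)⁻¹ = ∑ᵢ vᵢ wᵢ^* / (z - λᵢ)` on the unit vector `wⱼ / ‖wⱼ‖`: its norm is at least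
`κ(λⱼ) / |z - λⱼ| - ∑_{i ≠ j} κ(λᵢ) / |z - λᵢ|`. On the punctured disc `0 < |z - λⱼ| < ε√τ₁ / 2`
the first term exceeds `2 / ε`, and the gap `η₀ ≥ n ε √τ₂` keeps the sum below `1 / ε`, so
`σₙ(z - B) ≤ ε` there. Thus on `F(τ₂) ∧ η ≥ η₀` but outside `F(τ₁)` the pseudospectrum has area at
least `π ε² τ₁ / 4`, and Markov's inequality bounds the probability of that. -/

namespace Matrix.IsHermitian

variable {𝕜 : Type*} [RCLike 𝕜] {m : Type*} [Fintype m] [DecidableEq m] {H : Matrix m m 𝕜}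

lemma toEuclideanLin_eigenvectorBasis (hH : H.IsHermitian) (i : m) :
    toEuclideanLin H (hH.eigenvectorBasis i)
      = (hH.eigenvalues i : 𝕜) • hH.eigenvectorBasis i := by
  ext1
  rw [toLpLin_apply, WithLp.ofLp_toLp, hH.mulVec_eigenvectorBasis, WithLp.ofLp_smul,
    RCLike.real_smul_eq_coe_smul (K := 𝕜)]

lemma re_inner_toEuclideanLin_eq_sum (hH : H.IsHermitian) (x : EuclideanSpace 𝕜 m) :
    RCLike.re (inner 𝕜 x (toEuclideanLin H x))
      = ∑ i, hH.eigenvalues i * ‖inner 𝕜 (hH.eigenvectorBasis i) x‖ ^ 2 := by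
  rw [← hH.eigenvectorBasis.sum_inner_mul_inner, map_sum]
  refine Finset.sum_congr rfl fun i _ => ?_
  have hi : inner 𝕜 (hH.eigenvectorBasis i) (toEuclideanLin H x)
      = hH.eigenvalues i * inner 𝕜 (hH.eigenvectorBasis i) x := by
    rw [← isSymmetric_toEuclideanLin_iff.mpr hH, toEuclideanLin_eigenvectorBasis,
      inner_smul_left, RCLike.conj_ofReal]
  rw [hi, mul_left_comm, RCLike.re_ofReal_mul, inner_mul_symm_re_eq_norm, norm_mul,
    norm_inner_symm, sq]

lemma mul_norm_sq_le_re_inner (hH : H.IsHermitian) {c : ℝ} (hc : ∀ i, c ≤ hH.eigenvalues i)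
    (x : EuclideanSpace 𝕜 m) :
    c * ‖x‖ ^ 2 ≤ RCLike.re (inner 𝕜 x (toEuclideanLin H x)) := by
  rw [hH.re_inner_toEuclideanLin_eq_sum, ← hH.eigenvectorBasis.sum_sq_norm_inner_right,
    Finset.mul_sum]
  exact Finset.sum_le_sum fun i _ => by gcongr; exact hc i

lemma re_inner_toEuclideanLin_eigenvectorBasis (hH : H.IsHermitian) (i : m) :
    RCLike.re (inner 𝕜 (hH.eigenvectorBasis i) (toEuclideanLin H (hH.eigenvectorBasis i)))
      = hH.eigenvalues i := by
  rw [toEuclideanLin_eigenvectorBasis, inner_smul_right, inner_self_eq_norm_sq_to_K,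
    hH.eigenvectorBasis.orthonormal.1 i]
  simp

end Matrix.IsHermitian

lemma Matrix.norm_toEuclideanCLM_sq {𝕜 : Type*} [RCLike 𝕜] {m : Type*} [Fintype m]
    [DecidableEq m] (M : Matrix m m 𝕜) (x : EuclideanSpace 𝕜 m) :
    ‖toEuclideanCLM (n := m) (𝕜 := 𝕜) M x‖ ^ 2
      = RCLike.re (inner 𝕜 x (toEuclideanLin (Mᴴ * M) x)) := by
  rw [← coe_toEuclideanCLM_eq_toEuclideanLin, map_mul, ← star_eq_conjTranspose, map_star]
  simp [ContinuousLinearMap.star_eq_adjoint, ContinuousLinearMap.adjoint_inner_right]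

lemma Tuple.apply_sort_zero_le {α : Type*} [LinearOrder α] {n : ℕ} (f : Fin n → α)
    (hn : 0 < n) (i : Fin n) : f (Tuple.sort f ⟨0, hn⟩) ≤ f i := by
  rw [← Equiv.apply_symm_apply (Tuple.sort f) i]
  exact Tuple.monotone_sort f (Nat.zero_le _)

lemma norm_sub_sum_erase_le_norm_sum {E ι : Type*} [SeminormedAddCommGroup E] [DecidableEq ι]
    {s : Finset ι} (f : ι → E) {j : ι} (hj : j ∈ s) :
    ‖f j‖ - ∑ i ∈ s.erase j, ‖f i‖ ≤ ‖∑ i ∈ s, f i‖ := by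
  rw [← Finset.add_sum_erase s f hj]
  have h := norm_sub_le (f j + ∑ i ∈ s.erase j, f i) (∑ i ∈ s.erase j, f i)
  rw [add_sub_cancel_right] at h
  linarith [norm_sum_le (s.erase j) f]

lemma sub_le_norm_sub_of_le_norm_sub {E : Type*} [SeminormedAddCommGroup E] {a b z : E}
    {η r : ℝ} (hab : η ≤ ‖a - b‖) (hz : ‖z - b‖ < r) : η - r ≤ ‖z - a‖ := by
  have h := norm_sub_le_norm_sub_add_norm_sub a z b
  rw [norm_sub_rev a z] at h
  linarith

lemma MeasureTheory.measure_le_measure_add_lintegral_div {Ω : Type*} [MeasurableSpace Ω]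
    (μ : Measure Ω) {E F : Set Ω} {f : Ω → ℝ≥0∞} (hf : AEMeasurable f μ) {c : ℝ≥0∞}
    (hc₀ : c ≠ 0) (hc : c ≠ ∞) (hEF : ∀ ω ∈ E, ω ∉ F → c ≤ f ω) :
    μ E ≤ μ F + (∫⁻ ω, f ω ∂μ) / c := by
  have hsplit : E ⊆ F ∪ {ω | c ≤ f ω} := fun ω hω => by
    by_cases hF : ω ∈ F
    · exact Or.inl hF
    · exact Or.inr (hEF ω hω hF)
  calc μ E ≤ μ (F ∪ {ω | c ≤ f ω}) := measure_mono hsplit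
    _ ≤ μ F + μ {ω | c ≤ f ω} := measure_union_le _ _
    _ ≤ μ F + (∫⁻ ω, f ω ∂μ) / c := by gcongr; exact meas_ge_le_lintegral_div hf hc₀ hc

section SmallestSingularValue

variable {n : ℕ}

local notation "gram" M => Matrix.isHermitian_conjTranspose_mul_self M

lemma sLow_zero_eq_sqrt (M : Matrix (Fin n) (Fin n) ℂ) (hn : 0 < n) :
    sLow M 0 = √((gram M).eigenvalues (Tuple.sort (gram M).eigenvalues ⟨0, hn⟩)) := by
  rw [sLow, dif_pos hn, svAsc]

lemma sLow_zero_mul_norm_le (M : Matrix (Fin n) (Fin n) ℂ) (x : EuclideanSpace ℂ (Fin n)) :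
    sLow M 0 * ‖x‖ ≤ ‖toEuclideanCLM (n := Fin n) (𝕜 := ℂ) M x‖ := by
  rcases Nat.eq_zero_or_pos n with rfl | hn
  · simp [sLow]
  have hmin := (gram M).mul_norm_sq_le_re_inner (Tuple.apply_sort_zero_le _ hn) x
  rw [← Matrix.norm_toEuclideanCLM_sq] at hmin
  refine le_of_pow_le_pow_left₀ two_ne_zero (norm_nonneg _) ?_
  rwa [mul_pow, sLow_zero_eq_sqrt M hn,
    Real.sq_sqrt (Matrix.eigenvalues_conjTranspose_mul_self_nonneg M _)]

lemma exists_norm_eq_one_norm_toEuclideanCLM_eq_sLow (M : Matrix (Fin n) (Fin n) ℂ)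
    (hn : 0 < n) : ∃ x : EuclideanSpace ℂ (Fin n),
      ‖x‖ = 1 ∧ ‖toEuclideanCLM (n := Fin n) (𝕜 := ℂ) M x‖ = sLow M 0 := by
  set i₀ := Tuple.sort (gram M).eigenvalues ⟨0, hn⟩
  refine ⟨(gram M).eigenvectorBasis i₀, (gram M).eigenvectorBasis.orthonormal.1 i₀, ?_⟩
  rw [sLow_zero_eq_sqrt M hn, ← (gram M).re_inner_toEuclideanLin_eigenvectorBasis,
    ← Matrix.norm_toEuclideanCLM_sq, Real.sqrt_sq (norm_nonneg _)]

lemma sLow_zero_le_add_opNorm (M N : Matrix (Fin n) (Fin n) ℂ) :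
    sLow N 0 ≤ sLow M 0 + opNorm (N - M) := by
  rcases Nat.eq_zero_or_pos n with rfl | hn
  · simp [sLow, opNorm]
  obtain ⟨x, hx, hMx⟩ := exists_norm_eq_one_norm_toEuclideanCLM_eq_sLow M hn
  calc sLow N 0 = sLow N 0 * ‖x‖ := by rw [hx, mul_one]
    _ ≤ ‖toEuclideanCLM (n := Fin n) (𝕜 := ℂ) N x‖ := sLow_zero_mul_norm_le N x
    _ ≤ ‖toEuclideanCLM (n := Fin n) (𝕜 := ℂ) M x‖
        + ‖toEuclideanCLM (n := Fin n) (𝕜 := ℂ) (N - M) x‖ := by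
      rw [map_sub, _root_.sub_apply]
      exact norm_le_insert' _ _
    _ ≤ sLow M 0 + opNorm (N - M) := by
      rw [hMx, opNorm]
      gcongr
      simpa [hx] using (toEuclideanCLM (n := Fin n) (𝕜 := ℂ) (N - M)).le_opNorm x

lemma sLow_zero_le_of_mul_eq_one {M R : Matrix (Fin n) (Fin n) ℂ} (hMR : M * R = 1)
    {x : EuclideanSpace ℂ (Fin n)} (hx : ‖x‖ = 1) {ε : ℝ} (hε : 0 < ε)
    (hRx : ε⁻¹ ≤ ‖toEuclideanCLM (n := Fin n) (𝕜 := ℂ) R x‖) : sLow M 0 ≤ ε := by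
  set Rx := toEuclideanCLM (n := Fin n) (𝕜 := ℂ) R x
  have hpos : 0 < ‖Rx‖ := (inv_pos.mpr hε).trans_le hRx
  have h := sLow_zero_mul_norm_le M Rx
  rw [← mul_apply_eq_comp, ← map_mul, hMR, map_one, one_apply_eq_self, hx] at h
  calc sLow M 0 ≤ 1 / ‖Rx‖ := (le_div_iff₀ hpos).mpr h
    _ ≤ ε := by rw [one_div]; exact inv_le_of_inv_le₀ hε hRx

open scoped Matrix.Norms.L2Operator in
lemma continuous_sLow_zero : Continuous fun M : Matrix (Fin n) (Fin n) ℂ => sLow M 0 :=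
  (LipschitzWith.of_le_add fun N M => by
    simpa [dist_eq_norm, Matrix.cstar_norm_def, opNorm] using
      sLow_zero_le_add_opNorm M N).continuous

lemma measurable_volume_pspec (ε : ℝ) :
    Measurable fun B : Matrix (Fin n) (Fin n) ℂ => volume (pspec ε B) := by
  have : BorelSpace (Matrix (Fin n) (Fin n) ℂ) :=
    inferInstanceAs (BorelSpace (Fin n → Fin n → ℂ))
  have hcont : Continuous fun p : Matrix (Fin n) (Fin n) ℂ × ℂ => sLow (p.2 • 1 - p.1) 0 :=
    continuous_sLow_zero.comp ((continuous_snd.smul continuous_const).sub continuous_fst)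
  exact measurable_measure_prodMk_left (measurableSet_le hcont.measurable measurable_const)

end SmallestSingularValue

section Eigenvectors

variable {n : ℕ} (V : Matrix (Fin n) (Fin n) ℂ)

-- `vⱼ` and `wⱼ` of the spectral expansion `V * diagonal d * V⁻¹ = ∑ⱼ dⱼ vⱼ wⱼ^*`.
def rightEigvec (j : Fin n) : EuclideanSpace ℂ (Fin n) := WithLp.toLp 2 (fun i => V i j)

def leftEigvec (j : Fin n) : EuclideanSpace ℂ (Fin n) := WithLp.toLp 2 (star (V⁻¹ j))

lemma l2norm_eq_norm (v : Fin n → ℂ) :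
    l2norm v = ‖(WithLp.toLp 2 v : EuclideanSpace ℂ (Fin n))‖ :=
  (EuclideanSpace.norm_eq _).symm

lemma l2norm_star (v : Fin n → ℂ) : l2norm (star v) = l2norm v := by
  simp [l2norm]

lemma evCond_eq_norm_mul_norm (j : Fin n) :
    evCond V j = ‖rightEigvec V j‖ * ‖leftEigvec V j‖ := by
  rw [rightEigvec, leftEigvec, ← l2norm_eq_norm, ← l2norm_eq_norm, l2norm_star]
  rfl

lemma evCond_nonneg (j : Fin n) : 0 ≤ evCond V j := by
  rw [evCond_eq_norm_mul_norm]
  positivity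

lemma inner_leftEigvec (i : Fin n) (y : EuclideanSpace ℂ (Fin n)) :
    inner ℂ (leftEigvec V i) y = (V⁻¹ *ᵥ WithLp.ofLp y) i := by
  simp [leftEigvec, EuclideanSpace.inner_eq_star_dotProduct, mulVec, dotProduct_comm]

lemma leftEigvec_ne_zero (hV : IsUnit V) (j : Fin n) : leftEigvec V j ≠ 0 := by
  intro h
  have h1 : (V⁻¹ * V) j j = 1 := by
    rw [nonsing_inv_mul V ((isUnit_iff_isUnit_det V).mp hV), one_apply_eq]
  have h2 : (V⁻¹ * V) j j = inner ℂ (leftEigvec V j) (rightEigvec V j) := by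
    rw [inner_leftEigvec, rightEigvec, WithLp.ofLp_toLp, mul_apply]
    rfl
  rw [h, inner_zero_left, h1] at h2
  exact one_ne_zero h2

lemma toEuclideanCLM_conj_diagonal_apply (d : Fin n → ℂ) (x : EuclideanSpace ℂ (Fin n)) :
    toEuclideanCLM (n := Fin n) (𝕜 := ℂ) (V * diagonal d * V⁻¹) x
      = ∑ i, (d i * inner ℂ (leftEigvec V i) x) • rightEigvec V i := by
  ext k
  rw [ofLp_toEuclideanCLM, ← mulVec_mulVec, ← mulVec_mulVec]
  simp [diagonal_apply, inner_leftEigvec, rightEigvec, mulVec, dotProduct, mul_comm]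

lemma exists_norm_eq_one_sub_sum_le_norm_conj_diagonal (hV : IsUnit V) (d : Fin n → ℂ)
    (j : Fin n) : ∃ x : EuclideanSpace ℂ (Fin n), ‖x‖ = 1 ∧
      ‖d j‖ * evCond V j - ∑ i ∈ Finset.univ.erase j, ‖d i‖ * evCond V i
        ≤ ‖toEuclideanCLM (n := Fin n) (𝕜 := ℂ) (V * diagonal d * V⁻¹) x‖ := by
  set w := leftEigvec V j
  have hw : w ≠ 0 := leftEigvec_ne_zero V hV j
  set x : EuclideanSpace ℂ (Fin n) := (‖w‖⁻¹ : ℂ) • w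
  have hx : ‖x‖ = 1 := norm_smul_inv_norm hw
  have hwx : inner ℂ w x = ‖w‖ := by
    have : (‖w‖ : ℂ) ≠ 0 := by exact_mod_cast norm_ne_zero_iff.mpr hw
    rw [inner_smul_right, inner_self_eq_norm_sq_to_K, sq]
    exact inv_mul_cancel_left₀ this _
  refine ⟨x, hx, ?_⟩
  rw [toEuclideanCLM_conj_diagonal_apply]
  refine le_trans ?_ (norm_sub_sum_erase_le_norm_sum _ (Finset.mem_univ j))
  have hj : ‖(d j * inner ℂ (leftEigvec V j) x) • rightEigvec V j‖ = ‖d j‖ * evCond V j := by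
    rw [norm_smul, norm_mul, hwx, Complex.norm_real, norm_norm, evCond_eq_norm_mul_norm]
    ring
  have hi : ∀ i, ‖(d i * inner ℂ (leftEigvec V i) x) • rightEigvec V i‖
      ≤ ‖d i‖ * evCond V i := fun i => by
    rw [norm_smul, norm_mul, evCond_eq_norm_mul_norm, mul_assoc, mul_comm ‖rightEigvec V i‖]
    gcongr
    simpa [hx] using norm_inner_le_norm (𝕜 := ℂ) (leftEigvec V i) x
  rw [hj]
  gcongr with i
  exact hi i

end Eigenvectors

section Pseudospectrum

variable {n : ℕ}

lemma smul_one_sub_conj_diagonal_mul_conj_resolvent {V : Matrix (Fin n) (Fin n) ℂ}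
    (hV : IsUnit V) (lam : Fin n → ℂ) {z : ℂ} (hz : ∀ i, z ≠ lam i) :
    (z • 1 - V * diagonal lam * V⁻¹) * (V * diagonal (fun i => (z - lam i)⁻¹) * V⁻¹) = 1 := by
  have hdet := (isUnit_iff_isUnit_det V).mp hV
  have hconj : z • 1 - V * diagonal lam * V⁻¹ = V * diagonal (fun i => z - lam i) * V⁻¹ := by
    rw [show diagonal (fun i => z - lam i) = z • 1 - diagonal lam by
      ext i k; by_cases h : i = k <;> simp [h]]
    rw [mul_sub, sub_mul, mul_smul_comm, mul_one, smul_mul_assoc, mul_nonsing_inv V hdet]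
  have hdiag : diagonal (fun i => z - lam i) * diagonal (fun i => (z - lam i)⁻¹) = 1 := by
    rw [diagonal_mul_diagonal, ← diagonal_one]
    exact congrArg diagonal (funext fun i => mul_inv_cancel₀ (sub_ne_zero.mpr (hz i)))
  rw [hconj]
  calc V * diagonal (fun i => z - lam i) * V⁻¹ * (V * diagonal (fun i => (z - lam i)⁻¹) * V⁻¹)
      = V * (diagonal (fun i => z - lam i) * (V⁻¹ * V) * diagonal (fun i => (z - lam i)⁻¹))
          * V⁻¹ := by
        simp only [Matrix.mul_assoc]
    _ = 1 := by
        rw [nonsing_inv_mul V hdet, Matrix.mul_one, hdiag, Matrix.mul_one, mul_nonsing_inv V hdet]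

lemma sLow_smul_one_sub_conj_diagonal_le {V : Matrix (Fin n) (Fin n) ℂ} (hV : IsUnit V)
    (lam : Fin n → ℂ) {z : ℂ} (hz : ∀ i, z ≠ lam i) (j : Fin n) {ε : ℝ} (hε : 0 < ε)
    (h : ε⁻¹ ≤ ‖z - lam j‖⁻¹ * evCond V j
      - ∑ i ∈ Finset.univ.erase j, ‖z - lam i‖⁻¹ * evCond V i) :
    sLow (z • 1 - V * diagonal lam * V⁻¹) 0 ≤ ε := by
  obtain ⟨x, hx, hRx⟩ := exists_norm_eq_one_sub_sum_le_norm_conj_diagonal V hV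
    (fun i => (z - lam i)⁻¹) j
  simp only [norm_inv] at hRx
  exact sLow_zero_le_of_mul_eq_one (smul_one_sub_conj_diagonal_mul_conj_resolvent hV lam hz)
    hx hε (h.trans hRx)

lemma mem_pspec_conj_diagonal {V : Matrix (Fin n) (Fin n) ℂ} (hV : IsUnit V) (lam : Fin n → ℂ)
    {τ₁ τ₂ ε η₀ : ℝ} (hτ₁ : 0 < τ₁) (hε : 0 < ε) (hcond : (n : ℝ) * ε * √τ₂ ≤ η₀)
    (hκ : ∀ i, evCond V i ^ 2 ≤ τ₂) {j : Fin n} (hj : τ₁ < evCond V j ^ 2)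
    (hgap : ∀ i, i ≠ j → η₀ ≤ ‖lam i - lam j‖) {z : ℂ}
    (hz : z ∈ Metric.ball (lam j) (ε * √τ₁ / 2) \ {lam j}) :
    z ∈ pspec ε (V * diagonal lam * V⁻¹) := by
  set r := ε * √τ₁ / 2
  obtain ⟨hzr, hzj⟩ := hz
  rw [Metric.mem_ball, dist_eq_norm] at hzr
  have hzj : 0 < ‖z - lam j‖ := norm_pos_iff.mpr (sub_ne_zero.mpr hzj)
  have hκi : ∀ i, evCond V i ≤ √τ₂ := fun i => Real.le_sqrt_of_sq_le (hκ i)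
  have hκj : √τ₁ < evCond V j := by
    simpa [Real.sqrt_sq (evCond_nonneg V j)] using Real.sqrt_lt_sqrt hτ₁.le hj
  have hn : (1 : ℝ) ≤ n := by exact_mod_cast j.pos
  have hτ₁₂ : √τ₁ ≤ √τ₂ := hκj.le.trans (hκi j)
  have hs : 0 < ε * √τ₂ := mul_pos hε ((Real.sqrt_pos.mpr hτ₁).trans_le hτ₁₂)
  have hr : r ≤ ε * √τ₂ / 2 := by simp only [r]; gcongr
  have hns : ε * √τ₂ ≤ n * (ε * √τ₂) := le_mul_of_one_le_left hs.le hn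
  have hηr : ((n : ℝ) - 1) * (ε * √τ₂) ≤ η₀ - r := by nlinarith
  have hηr₀ : 0 < η₀ - r := by nlinarith
  have hfar : ∀ i, i ≠ j → η₀ - r ≤ ‖z - lam i‖ := fun i hi =>
    sub_le_norm_sub_of_le_norm_sub (hgap i hi) hzr
  have hne : ∀ i, z ≠ lam i := fun i h => by
    by_cases hi : i = j
    · exact hzj.ne' (by rw [h, hi, sub_self, norm_zero])
    · exact hηr₀.not_ge (by simpa [h] using hfar i hi)
  have hnear : 2 * ε⁻¹ ≤ ‖z - lam j‖⁻¹ * evCond V j := by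
    rw [show 2 * ε⁻¹ = r⁻¹ * √τ₁ by simp only [r]; field_simp [(Real.sqrt_pos.mpr hτ₁).ne']]
    gcongr
  have hrest : ∑ i ∈ Finset.univ.erase j, ‖z - lam i‖⁻¹ * evCond V i ≤ ε⁻¹ := by
    calc ∑ i ∈ Finset.univ.erase j, ‖z - lam i‖⁻¹ * evCond V i
        ≤ ∑ _i ∈ Finset.univ.erase j, (η₀ - r)⁻¹ * √τ₂ :=
          Finset.sum_le_sum fun i hi => by
            gcongr
            exacts [evCond_nonneg V i, hfar i (Finset.ne_of_mem_erase hi), hκi i]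
      _ = ((n : ℝ) - 1) * (ε * √τ₂) / (η₀ - r) * ε⁻¹ := by
          rw [Finset.sum_const, Finset.card_erase_of_mem (Finset.mem_univ j), Finset.card_univ,
            Fintype.card_fin, nsmul_eq_mul, Nat.cast_pred j.pos]
          field_simp
      _ ≤ ε⁻¹ := mul_le_of_le_one_left (by positivity) ((div_le_one hηr₀).mpr hηr)
  exact sLow_smul_one_sub_conj_diagonal_le hV lam hne j hε (by linarith)

open Polynomial in
lemma roots_charpoly_conj_diagonal {V : Matrix (Fin n) (Fin n) ℂ} (hV : IsUnit V)
    (lam : Fin n → ℂ) :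
    (V * diagonal lam * V⁻¹).charpoly.roots = Finset.univ.val.map lam := by
  rw [← hV.unit_spec, charpoly_units_conj, charpoly_diagonal, roots_prod]
  · simp
  · simp [Finset.prod_ne_zero_iff, X_sub_C_ne_zero]

lemma le_norm_sub_of_le_minGap {V : Matrix (Fin n) (Fin n) ℂ} (hV : IsUnit V)
    {lam : Fin n → ℂ} (hlam : Function.Injective lam) {η₀ : ℝ}
    (hgap : η₀ ≤ minGap (V * diagonal lam * V⁻¹)) {i j : Fin n} (hij : i ≠ j) :
    η₀ ≤ ‖lam i - lam j‖ := by
  classical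
  refine hgap.trans (csInf_le ⟨0, ?_⟩ ⟨lam i, ?_, lam j, ?_, rfl⟩)
  · rintro d ⟨a, -, b, -, rfl⟩
    exact norm_nonneg _
  · rw [roots_charpoly_conj_diagonal hV]
    exact Multiset.mem_map_of_mem lam (Finset.mem_univ_val i)
  · rw [Multiset.mem_erase_of_ne (hlam.ne hij).symm, roots_charpoly_conj_diagonal hV]
    exact Multiset.mem_map_of_mem lam (Finset.mem_univ_val j)

lemma ofReal_le_volume_pspec {τ₁ τ₂ ε η₀ : ℝ} (hτ₁ : 0 < τ₁) (hε : 0 < ε)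
    (hcond : (n : ℝ) * ε * √τ₂ ≤ η₀) {B : Matrix (Fin n) (Fin n) ℂ}
    (h₂ : distinctCondEvent τ₂ B) (h₁ : ¬ distinctCondEvent τ₁ B) (hgap : η₀ ≤ minGap B) :
    ENNReal.ofReal (Real.pi * (ε ^ 2 * τ₁) / 4) ≤ volume (pspec ε B) := by
  obtain ⟨V, lam, hlam, hV, rfl, hκ⟩ := h₂
  obtain ⟨j, hj⟩ : ∃ j, τ₁ < evCond V j ^ 2 := by
    by_contra! h
    exact h₁ ⟨V, lam, hlam, hV, rfl, h⟩
  have hdisk : Metric.ball (lam j) (ε * √τ₁ / 2) \ {lam j}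
      ⊆ pspec ε (V * diagonal lam * V⁻¹) := fun z hz =>
    mem_pspec_conj_diagonal hV lam hτ₁ hε hcond hκ hj
      (fun i hi => le_norm_sub_of_le_minGap hV hlam hgap hi) hz
  refine le_trans (le_of_eq ?_) (measure_mono hdisk)
  rw [measure_sdiff_null (measure_singleton _), Complex.volume_ball,
    ← ENNReal.ofReal_pow (by positivity), ← ENNReal.ofReal_coe_nnreal, NNReal.coe_real_pi,
    ← ENNReal.ofReal_mul (by positivity), div_pow, mul_pow, Real.sq_sqrt hτ₁.le]
  congr 1
  ring

end Pseudospectrum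

theorem bootstrap_tug_general {Ω : Type*} [MeasurableSpace Ω] (μ : Measure Ω)
    {n : ℕ} (A : Ω → Matrix (Fin n) (Fin n) ℂ)
    (hA : Measurable A) (τ₁ τ₂ ε η₀ : ℝ)
    (hτ₁ : 0 < τ₁) (hε : 0 < ε)
    (hcond : (n : ℝ) * ε * Real.sqrt τ₂ ≤ η₀) :
    μ {ω | distinctCondEvent τ₂ (A ω) ∧ η₀ ≤ minGap (A ω)}
      ≤ μ {ω | distinctCondEvent τ₁ (A ω) ∧ η₀ ≤ minGap (A ω)}
        + ENNReal.ofReal (4 / Real.pi)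
            * (∫⁻ ω, MeasureTheory.volume (pspec ε (A ω)) ∂μ)
            / ENNReal.ofReal (ε ^ 2 * τ₁) := by
  set c := ENNReal.ofReal (Real.pi * (ε ^ 2 * τ₁) / 4)
  have hc₀ : c ≠ 0 := (ENNReal.ofReal_pos.mpr (by positivity)).ne'
  have hmarkov := measure_le_measure_add_lintegral_div μ
    (E := {ω | distinctCondEvent τ₂ (A ω) ∧ η₀ ≤ minGap (A ω)})
    (F := {ω | distinctCondEvent τ₁ (A ω) ∧ η₀ ≤ minGap (A ω)})
    ((measurable_volume_pspec ε).comp hA).aemeasurable hc₀ ENNReal.ofReal_ne_top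
    fun ω ⟨h₂, hgap⟩ h₁ => ofReal_le_volume_pspec hτ₁ hε hcond h₂ (fun h => h₁ ⟨h, hgap⟩) hgap
  have hc : c⁻¹ = ENNReal.ofReal (4 / Real.pi) * (ENNReal.ofReal (ε ^ 2 * τ₁))⁻¹ := by
    rw [← ENNReal.ofReal_inv_of_pos (by positivity), ← ENNReal.ofReal_inv_of_pos (by positivity),
      ← ENNReal.ofReal_mul (by positivity)]
    congr 1
    field_simp
  rwa [div_eq_mul_inv, hc, ← mul_assoc, mul_comm _ (ENNReal.ofReal _), ← div_eq_mul_inv] at hmarkov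

/-- a single bootstrap tug. -/
theorem bootstrap_tug {Ω : Type*} [MeasurableSpace Ω] (μ : Measure Ω)
    [IsProbabilityMeasure μ] {n : ℕ} (A : Ω → Matrix (Fin n) (Fin n) ℂ)
    (hA : Measurable A) (τ₁ τ₂ ε η₀ : ℝ)
    (hτ₁ : 0 < τ₁) (hτ : τ₁ < τ₂) (hε : 0 < ε) (hη₀ : 0 < η₀)
    (hcond : (n : ℝ) * ε * Real.sqrt τ₂ ≤ η₀) :
    μ {ω | distinctCondEvent τ₂ (A ω) ∧ η₀ ≤ minGap (A ω)}
      ≤ μ {ω | distinctCondEvent τ₁ (A ω) ∧ η₀ ≤ minGap (A ω)}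
        + ENNReal.ofReal (4 / Real.pi)
            * (∫⁻ ω, MeasureTheory.volume (pspec ε (A ω)) ∂μ)
            / ENNReal.ofReal (ε ^ 2 * τ₁) :=
  bootstrap_tug_general μ A hA τ₁ τ₂ ε η₀ hτ₁ hε hcond
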